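/- (Uniqueness part of Theorem on merge-and-split.) If P is a strictly D_c-stable partition of N, then P is the unique D_c-stable partition of N: P is D_c-stable, and any D_c-stable partition Q of N satisfies Q = P. -/

import Mathlib

open Finset

variable {α : Type*} [Fintype α] [DecidableEq α]

/-- A partition of the player set `N`: a family of pairwise disjoint nonempty
subsets whose union is `N`. -/
def IsPartition (P : Finset (Finset α)) : Prop :=
  (∀ B ∈ P, B.Nonempty) ∧ (P : Set (Finset α)).PairwiseDisjoint id ∧
    P.sup id = Finset.univ

/-- A collection in `N`: a family of pairwise disjoint nonempty subsets of `N`. -/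
def IsCollection (C : Finset (Finset α)) : Prop :=
  (∀ B ∈ C, B.Nonempty) ∧ (C : Set (Finset α)).PairwiseDisjoint id

/-- The value of a collection (or partition): the sum of the values of its blocks. -/
def collVal (v : Finset α → ℝ) (C : Finset (Finset α)) : ℝ := ∑ B ∈ C, v B

/-- `S[P]`: the collection consisting of the nonempty sets among
`(S_1 ∪ ⋯ ∪ S_k) ∩ P_j`, for the blocks `P_j` of `P`. -/
def restrictColl (C P : Finset (Finset α)) : Finset (Finset α) :=
  (P.image fun Pj => C.sup id ∩ Pj).filter fun B => B.Nonempty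

/-- `P` is `D_c`-stable: `v(S[P]) ≥ v(S)` for every collection `S` in `N`. -/
def DcStable (v : Finset α → ℝ) (P : Finset (Finset α)) : Prop :=
  ∀ C : Finset (Finset α), IsCollection C →
    collVal v (restrictColl C P) ≥ collVal v C

/-- `P` is strictly `D_c`-stable: strict superadditivity for `P`-compatible
collections with at least two blocks, and strict gain from splitting any
`P`-incompatible coalition along `P`. -/
def StrictlyDcStable (v : Finset α → ℝ) (P : Finset (Finset α)) : Prop :=
  (∀ C : Finset (Finset α), IsCollection C → 2 ≤ C.card →
      (∃ Pj ∈ P, C.sup id ⊆ Pj) → v (C.sup id) > ∑ B ∈ C, v B) ∧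
  (∀ S : Finset α, (∀ Pj ∈ P, ¬ S ⊆ Pj) →
      (∑ Pj ∈ P.filter fun Pj => (S ∩ Pj).Nonempty, v (S ∩ Pj)) > v S)

/-! Every collection `C` passes to `C[P]` in two stages: first each block `B ∈ C`
is split into its traces `B ∩ P_j`, then for each `j` the traces inside `P_j` are merged.
Splitting gains strictly on a `P`-incompatible block and merging gains strictly as soon as
two blocks of `C` meet the same `P_j`, so `v(C) ≤ v(C[P])`, strictly unless every block of `C`
lies in some `P_j` and no two of them share one. For a partition `Q ≠ P` this gives
`v(Q) < v(Q[P]) = v(P)`, while `D_c`-stability of `Q`, applied to the collection `P`,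
gives `v(P) ≤ v(P[Q]) = v(Q)`. -/

section

omit [Fintype α]

omit [DecidableEq α] in
lemma sum_filter_nonempty_eq {ι : Type*} {v : Finset α → ℝ} (hv0 : v ∅ = 0)
    (s : Finset ι) (f : ι → Finset α) :
    ∑ i ∈ s with (f i).Nonempty, v (f i) = ∑ i ∈ s, v (f i) :=
  sum_filter_of_ne fun _ _ hi => nonempty_iff_ne_empty.2 fun he => hi (by rw [he, hv0])

lemma injOn_inter_left_of_pairwiseDisjoint {P : Finset (Finset α)}
    (hP : (P : Set (Finset α)).PairwiseDisjoint id) (S : Finset α) :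
    Set.InjOn (S ∩ ·) ↑(P.filter fun Pj => (S ∩ Pj).Nonempty) := by
  intro Pj hPj Pk hPk h
  obtain ⟨x, hx⟩ := (mem_filter.1 hPj).2
  have hx' : x ∈ S ∩ Pk := (show S ∩ Pj = S ∩ Pk from h) ▸ hx
  exact hP.elim_finset (mem_filter.1 hPj).1 (mem_filter.1 hPk).1 x
    (mem_inter.1 hx).2 (mem_inter.1 hx').2

lemma collVal_restrictColl {v : Finset α → ℝ} (hv0 : v ∅ = 0) {P : Finset (Finset α)}
    (hP : (P : Set (Finset α)).PairwiseDisjoint id) (C : Finset (Finset α)) :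
    collVal v (restrictColl C P) = ∑ Pj ∈ P, v (C.sup id ∩ Pj) := by
  rw [collVal, restrictColl, filter_image, sum_image (injOn_inter_left_of_pairwiseDisjoint hP _),
    sum_filter_nonempty_eq hv0 P (C.sup id ∩ ·)]

lemma sum_inter_eq_of_subset {v : Finset α → ℝ} (hv0 : v ∅ = 0) {P : Finset (Finset α)}
    (hP : (P : Set (Finset α)).PairwiseDisjoint id) {Pj B : Finset α} (hPj : Pj ∈ P)
    (hB : B ⊆ Pj) : ∑ Pk ∈ P, v (B ∩ Pk) = v B := by
  rw [sum_eq_single_of_mem Pj hPj, inter_eq_left.2 hB]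
  intro Pk hPk hne
  have hdisj : Disjoint B Pk := (hP hPj hPk hne.symm).mono_left hB
  rw [disjoint_iff_inter_eq_empty.1 hdisj, hv0]

def traceOn (C : Finset (Finset α)) (S : Finset α) : Finset (Finset α) :=
  (C.filter fun B => (B ∩ S).Nonempty).image (· ∩ S)

section traceOn

variable {C : Finset (Finset α)} {S : Finset α}

lemma injOn_inter_right_of_pairwiseDisjoint (hC : (C : Set (Finset α)).PairwiseDisjoint id)
    (S : Finset α) : Set.InjOn (· ∩ S) ↑(C.filter fun B => (B ∩ S).Nonempty) := by
  simpa only [inter_comm S] using injOn_inter_left_of_pairwiseDisjoint hC S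

lemma IsCollection.traceOn (hC : IsCollection C) (S : Finset α) :
    IsCollection (traceOn C S) := by
  refine ⟨fun T hT => ?_, fun T hT T' hT' hne => ?_⟩
  · obtain ⟨B, hB, rfl⟩ := mem_image.1 hT
    exact (mem_filter.1 hB).2
  · obtain ⟨B, hB, rfl⟩ := mem_image.1 (mem_coe.1 hT)
    obtain ⟨B', hB', rfl⟩ := mem_image.1 (mem_coe.1 hT')
    have hBB' : B ≠ B' := fun h => hne (by rw [h])
    exact (hC.2 (mem_filter.1 hB).1 (mem_filter.1 hB').1 hBB').mono
      inter_subset_left inter_subset_left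

lemma sup_traceOn : (traceOn C S).sup id = C.sup id ∩ S := by
  rw [traceOn, sup_image, Function.id_comp,
    show C.sup id ∩ S = C.sup fun B => B ∩ S from sup_inf_distrib_right C id S]
  refine le_antisymm (sup_mono (filter_subset _ _)) (Finset.sup_le fun B hB => ?_)
  rcases (B ∩ S).eq_empty_or_nonempty with h | h
  · simp only [h, empty_subset]
  · exact le_sup (f := fun B => B ∩ S) (mem_filter.2 ⟨hB, h⟩)

lemma sup_traceOn_subset : (traceOn C S).sup id ⊆ S := by
  rw [sup_traceOn]
  exact inter_subset_right

lemma card_traceOn (hC : (C : Set (Finset α)).PairwiseDisjoint id) :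
    #(traceOn C S) = #{B ∈ C | (B ∩ S).Nonempty} := by
  rw [traceOn, card_image_of_injOn (injOn_inter_right_of_pairwiseDisjoint hC S)]

lemma sum_traceOn {v : Finset α → ℝ} (hv0 : v ∅ = 0)
    (hC : (C : Set (Finset α)).PairwiseDisjoint id) :
    ∑ T ∈ traceOn C S, v T = ∑ B ∈ C, v (B ∩ S) := by
  rw [traceOn, sum_image (injOn_inter_right_of_pairwiseDisjoint hC S),
    sum_filter_nonempty_eq hv0 C (· ∩ S)]

end traceOn

namespace StrictlyDcStable

variable {v : Finset α → ℝ} {P : Finset (Finset α)}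

lemma lt_sum_inter (hstab : StrictlyDcStable v P) (hv0 : v ∅ = 0) {B : Finset α}
    (hB : ∀ Pj ∈ P, ¬ B ⊆ Pj) : v B < ∑ Pj ∈ P, v (B ∩ Pj) := by
  simpa only [sum_filter_nonempty_eq hv0 P (B ∩ ·)] using hstab.2 B hB

lemma le_sum_inter (hstab : StrictlyDcStable v P) (hv0 : v ∅ = 0)
    (hP : (P : Set (Finset α)).PairwiseDisjoint id) (B : Finset α) :
    v B ≤ ∑ Pj ∈ P, v (B ∩ Pj) := by
  by_cases h : ∃ Pj ∈ P, B ⊆ Pj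
  · obtain ⟨Pj, hPj, hB⟩ := h
    exact (sum_inter_eq_of_subset hv0 hP hPj hB).ge
  · push Not at h
    exact (hstab.lt_sum_inter hv0 h).le

lemma sum_le_of_sup_subset (hstab : StrictlyDcStable v P) (hv0 : v ∅ = 0)
    {D : Finset (Finset α)} (hD : IsCollection D) {Pj : Finset α} (hPj : Pj ∈ P)
    (hDP : D.sup id ⊆ Pj) : ∑ B ∈ D, v B ≤ v (D.sup id) := by
  rcases lt_or_ge #D 2 with h | h
  · rcases D.eq_empty_or_nonempty with rfl | ⟨B, hB⟩
    · simp [hv0]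
    · rw [eq_singleton_iff_unique_mem.2 ⟨hB, fun B' hB' => card_le_one.1 (by omega) B' hB' B hB⟩]
      simp
  · exact (hstab.1 D hD h ⟨Pj, hPj, hDP⟩).le

lemma sum_inter_le (hstab : StrictlyDcStable v P) (hv0 : v ∅ = 0)
    {C : Finset (Finset α)} (hC : IsCollection C) {Pj : Finset α} (hPj : Pj ∈ P) :
    ∑ B ∈ C, v (B ∩ Pj) ≤ v (C.sup id ∩ Pj) := by
  rw [← sum_traceOn hv0 hC.2, ← sup_traceOn]
  exact hstab.sum_le_of_sup_subset hv0 (hC.traceOn Pj) hPj sup_traceOn_subset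

lemma sum_inter_lt (hstab : StrictlyDcStable v P) (hv0 : v ∅ = 0)
    {C : Finset (Finset α)} (hC : IsCollection C) {Pj : Finset α} (hPj : Pj ∈ P)
    (h2 : 2 ≤ #{B ∈ C | (B ∩ Pj).Nonempty}) :
    ∑ B ∈ C, v (B ∩ Pj) < v (C.sup id ∩ Pj) := by
  rw [← sum_traceOn hv0 hC.2, ← sup_traceOn]
  exact hstab.1 _ (hC.traceOn Pj) (card_traceOn hC.2 ▸ h2) ⟨Pj, hPj, sup_traceOn_subset⟩

lemma collVal_le (hstab : StrictlyDcStable v P) (hv0 : v ∅ = 0)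
    (hP : (P : Set (Finset α)).PairwiseDisjoint id) {C : Finset (Finset α)}
    (hC : IsCollection C) : collVal v C ≤ collVal v (restrictColl C P) :=
  calc collVal v C ≤ ∑ B ∈ C, ∑ Pj ∈ P, v (B ∩ Pj) :=
        sum_le_sum fun B _ => hstab.le_sum_inter hv0 hP B
    _ = ∑ Pj ∈ P, ∑ B ∈ C, v (B ∩ Pj) := sum_comm
    _ ≤ ∑ Pj ∈ P, v (C.sup id ∩ Pj) := sum_le_sum fun _ hPj => hstab.sum_inter_le hv0 hC hPj
    _ = collVal v (restrictColl C P) := (collVal_restrictColl hv0 hP C).symm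

lemma collVal_lt (hstab : StrictlyDcStable v P) (hv0 : v ∅ = 0)
    (hP : (P : Set (Finset α)).PairwiseDisjoint id) {C : Finset (Finset α)}
    (hC : IsCollection C)
    (h : (∃ B ∈ C, ∀ Pj ∈ P, ¬ B ⊆ Pj) ∨ ∃ Pj ∈ P, 2 ≤ #{B ∈ C | (B ∩ Pj).Nonempty}) :
    collVal v C < collVal v (restrictColl C P) := by
  have hsplit := fun B (_ : B ∈ C) => hstab.le_sum_inter hv0 hP B
  have hmerge := fun Pj (hPj : Pj ∈ P) => hstab.sum_inter_le hv0 hC hPj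
  rw [collVal_restrictColl hv0 hP, collVal]
  rcases h with ⟨B, hB, hinc⟩ | ⟨Pj, hPj, h2⟩
  · calc ∑ B ∈ C, v B < ∑ B ∈ C, ∑ Pj ∈ P, v (B ∩ Pj) :=
          sum_lt_sum hsplit ⟨B, hB, hstab.lt_sum_inter hv0 hinc⟩
      _ = ∑ Pj ∈ P, ∑ B ∈ C, v (B ∩ Pj) := sum_comm
      _ ≤ ∑ Pj ∈ P, v (C.sup id ∩ Pj) := sum_le_sum hmerge
  · calc ∑ B ∈ C, v B ≤ ∑ B ∈ C, ∑ Pj ∈ P, v (B ∩ Pj) := sum_le_sum hsplit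
      _ = ∑ Pj ∈ P, ∑ B ∈ C, v (B ∩ Pj) := sum_comm
      _ < ∑ Pj ∈ P, v (C.sup id ∩ Pj) :=
          sum_lt_sum hmerge ⟨Pj, hPj, hstab.sum_inter_lt hv0 hC hPj h2⟩

end StrictlyDcStable

end

lemma restrictColl_eq_of_sup_eq_univ {C P : Finset (Finset α)} (hC : C.sup id = univ)
    (hP : ∀ B ∈ P, B.Nonempty) : restrictColl C P = P := by
  simp only [restrictColl, hC, univ_inter, image_id']
  exact filter_true_of_mem hP

lemma IsPartition.isCollection {P : Finset (Finset α)} (hP : IsPartition P) : IsCollection P :=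
  ⟨hP.1, hP.2.1⟩

lemma IsPartition.eq_of_subset {P Q : Finset (Finset α)} (hP : IsPartition P)
    (hQ : IsPartition Q) (hQP : Q ⊆ P) : Q = P := by
  refine Subset.antisymm hQP fun Pj hPj => ?_
  obtain ⟨x, hx⟩ := hP.1 Pj hPj
  obtain ⟨B, hB, hxB⟩ := mem_sup.1 (hQ.2.2 ▸ mem_univ x : x ∈ Q.sup id)
  rwa [hP.2.1.elim_finset hPj (hQP hB) x hx hxB]

lemma IsPartition.eq_of_refines {P Q : Finset (Finset α)} (hP : IsPartition P)
    (hQ : IsPartition Q) (hsub : ∀ B ∈ Q, ∃ Pj ∈ P, B ⊆ Pj)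
    (hmeet : ∀ Pj ∈ P, #{B ∈ Q | (B ∩ Pj).Nonempty} ≤ 1) : Q = P := by
  refine hP.eq_of_subset hQ fun B hB => ?_
  obtain ⟨Pj, hPj, hBPj⟩ := hsub B hB
  obtain ⟨x, hx⟩ := hQ.1 B hB
  suffices Pj ⊆ B from Subset.antisymm hBPj this ▸ hPj
  intro y hy
  obtain ⟨B', hB', hyB'⟩ := mem_sup.1 (hQ.2.2 ▸ mem_univ y : y ∈ Q.sup id)
  have hB'B : B' = B := card_le_one.1 (hmeet Pj hPj)
    B' (mem_filter.2 ⟨hB', y, mem_inter.2 ⟨hyB', hy⟩⟩)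
    B (mem_filter.2 ⟨hB, x, mem_inter.2 ⟨hx, hBPj hx⟩⟩)
  exact hB'B ▸ hyB'

lemma StrictlyDcStable.collVal_lt_of_ne {v : Finset α → ℝ} {P : Finset (Finset α)}
    (hstab : StrictlyDcStable v P) (hv0 : v ∅ = 0) (hP : IsPartition P)
    {Q : Finset (Finset α)} (hQ : IsPartition Q) (hne : Q ≠ P) :
    collVal v Q < collVal v P := by
  rw [← restrictColl_eq_of_sup_eq_univ hQ.2.2 hP.1]
  refine hstab.collVal_lt hv0 hP.2.1 hQ.isCollection ?_
  by_contra! h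
  exact hne (hP.eq_of_refines hQ h.1 fun Pj hPj => Nat.le_of_lt_succ (h.2 Pj hPj))

theorem strictlyDcStable_unique_general {α : Type*} [Fintype α] [DecidableEq α]
    (v : Finset α → ℝ) (hv0 : v ∅ = 0)
    (P : Finset (Finset α)) (hP : IsPartition P) (hstab : StrictlyDcStable v P) :
    DcStable v P ∧
      ∀ Q : Finset (Finset α), IsPartition Q → DcStable v Q → Q = P := by
  refine ⟨fun C hC => hstab.collVal_le hv0 hP.2.1 hC, fun Q hQ hQstab => ?_⟩
  by_contra hne
  have hPQ : collVal v Q ≥ collVal v P := by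
    simpa only [restrictColl_eq_of_sup_eq_univ hP.2.2 hQ.1] using hQstab P hP.isCollection
  exact (hstab.collVal_lt_of_ne hv0 hP hQ hne).not_ge hPQ

/-- a strictly `D_c`-stable partition `P` is the unique `D_c`-stable
partition of `N`: `P` is `D_c`-stable and any `D_c`-stable partition equals `P`. -/
theorem strictlyDcStable_unique {α : Type*} [Fintype α] [DecidableEq α] [Nonempty α]
    (v : Finset α → ℝ) (hv0 : v ∅ = 0)
    (P : Finset (Finset α)) (hP : IsPartition P) (hstab : StrictlyDcStable v P) :
    DcStable v P ∧
      ∀ Q : Finset (Finset α), IsPartition Q → DcStable v Q → Q = P :=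
  strictlyDcStable_unique_general v hv0 P hP hstab
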